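/- arXiv:2406.08892 — 4 statements merged into one kernel-verified Lean document; each statement's English description precedes it below -/
import Mathlib

section
/- The function ψ(ζ) = (ζ(1+√(1−ζ)))^{1/3} + (ζ(1−√(1−ζ)))^{1/3} is monotonically increasing on the interval (0, 1/9). -/
/-! Write `s = √(1 - ζ)`. The second summand's radicand `ζ (1 - s)` is a product of two nonnegative
increasing factors, and the first one is `ζ + ζ s`, where `ζ s = √(ζ² (1 - ζ))` increases as long as
`ζ ≤ 2/3`. Cube roots preserve the order of nonnegative reals, so `ψ` increases on `[0, 2/3]`. -/

open Set

noncomputable def psi (z : ℝ) : ℝ :=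
  (z * (1 + Real.sqrt (1 - z))) ^ ((1:ℝ)/3) + (z * (1 - Real.sqrt (1 - z))) ^ ((1:ℝ)/3)

lemma MonotoneOn.rpow_const {α : Type*} [Preorder α] {f : α → ℝ} {s : Set α} {r : ℝ}
    (hf : MonotoneOn f s) (hf₀ : ∀ x ∈ s, 0 ≤ f x) (hr : 0 ≤ r) :
    MonotoneOn (fun x ↦ f x ^ r) s :=
  fun _ hx _ hy hxy ↦ Real.rpow_le_rpow (hf₀ _ hx) (hf hx hy hxy) hr

lemma sq_mul_one_sub_monotoneOn : MonotoneOn (fun z : ℝ ↦ z ^ 2 * (1 - z)) (Icc 0 (2/3)) := by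
  rintro x ⟨hx₀, hx₁⟩ y ⟨hy₀, hy₁⟩ hxy
  -- `y²(1-y) - x²(1-x) = (y-x)(x+y - x²-xy-y²)` and
  -- `x+y - x²-xy-y² = x(2/3-x) + y(2/3-y) + (x(2/3-y) + y(2/3-x))/2`.
  nlinarith [mul_nonneg (sub_nonneg.2 hxy) (mul_nonneg hx₀ (by linarith : 0 ≤ 2/3 - y)),
    mul_nonneg (sub_nonneg.2 hxy) (mul_nonneg hy₀ (by linarith : 0 ≤ 2/3 - x)),
    mul_nonneg (sub_nonneg.2 hxy) (mul_nonneg hx₀ (by linarith : 0 ≤ 2/3 - x)),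
    mul_nonneg (sub_nonneg.2 hxy) (mul_nonneg hy₀ (by linarith : 0 ≤ 2/3 - y))]

lemma mul_sqrt_one_sub_monotoneOn :
    MonotoneOn (fun z : ℝ ↦ z * Real.sqrt (1 - z)) (Icc 0 (2/3)) := by
  have hsqrt {z : ℝ} (hz : 0 ≤ z) : z * Real.sqrt (1 - z) = Real.sqrt (z ^ 2 * (1 - z)) := by
    rw [Real.sqrt_mul (sq_nonneg z), Real.sqrt_sq hz]
  intro x hx y hy hxy
  dsimp only
  rw [hsqrt hx.1, hsqrt hy.1]
  exact Real.sqrt_le_sqrt (sq_mul_one_sub_monotoneOn hx hy hxy)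

lemma sqrt_one_sub_le_one {z : ℝ} (hz : 0 ≤ z) : Real.sqrt (1 - z) ≤ 1 :=
  Real.sqrt_le_one.mpr (by linarith)

lemma one_sub_sqrt_one_sub_monotone : Monotone (fun z : ℝ ↦ 1 - Real.sqrt (1 - z)) :=
  fun _ _ hxy ↦ sub_le_sub_left (Real.sqrt_le_sqrt (by linarith)) 1

lemma psi_monotoneOn_Icc : MonotoneOn psi (Icc 0 (2/3)) := by
  have hplus : MonotoneOn (fun z : ℝ ↦ z * (1 + Real.sqrt (1 - z))) (Icc 0 (2/3)) := by
    simp only [mul_one_add]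
    exact monotoneOn_id.add mul_sqrt_one_sub_monotoneOn
  have hminus : MonotoneOn (fun z : ℝ ↦ z * (1 - Real.sqrt (1 - z))) (Icc 0 (2/3)) :=
    monotoneOn_id.mul (one_sub_sqrt_one_sub_monotone.monotoneOn _) (fun _ hz ↦ hz.1)
      (fun _ hz ↦ sub_nonneg.2 (sqrt_one_sub_le_one hz.1))
  refine (hplus.rpow_const ?_ (by norm_num)).add (hminus.rpow_const ?_ (by norm_num))
  · exact fun z hz ↦ mul_nonneg hz.1 (by positivity)
  · exact fun z hz ↦ mul_nonneg hz.1 (sub_nonneg.2 (sqrt_one_sub_le_one hz.1))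

theorem psi_monotone : MonotoneOn psi (Set.Ioo (0:ℝ) (1/9)) :=
  psi_monotoneOn_Icc.mono (Ioo_subset_Icc_self.trans (Icc_subset_Icc_right (by norm_num)))
end

section
/- Let F(x) = −x − γ₂ x²/2 + γ₄ x⁴/24 where γ₂ > 0, γ₄ > 0, and 9γ₄ > 8γ₂³. Set ζ = 8γ₂³/(9γ₄) and Z = √(1−ζ). Then the unique positive critical point of F is x* = (3ζ^{1/3}/(2γ₂))((1+Z)^{1/3} + (1−Z)^{1/3}), and the minimum of F over x ≥ 0 equals −(9/(16γ₂))(2ψ(ζ) + ψ(ζ)²), where ψ(ζ) = ζ^{1/3}((1+Z)^{1/3} + (1−Z)^{1/3}). -/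
/-!
Write `ψ = a + b` with `a³ = ζ(1 + Z)`, `b³ = ζ(1 - Z)`. Since `ab = (ζ³(1 - Z²))^{1/3} = ζ`, Cardano's
identity `(a + b)³ = a³ + b³ + 3ab(a + b)` gives `ψ³ = 2ζ + 3ζψ`, and with `9γ₄ζ = 8γ₂³` this says exactly that
`x* = 3ψ/(2γ₂)` is a root of `F'(x) = -1 - γ₂x + γ₄x³/6`. For any positive root `r` of `F'`,
`24γ₄(F y - F r) = γ₄(y - r)²(γ₄(y² + 2ry + 3r²) - 12γ₂)`, and the last factor is positive for `y ≥ 0`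
because `γ₄r² > 6γ₂`; the same bound shows that `F'` has no other positive root.
-/

open Real Set

lemma rpow_one_div_three_pow_three {t : ℝ} (ht : 0 ≤ t) : (t ^ ((1 : ℝ) / 3)) ^ 3 = t := by
  rw [one_div]
  exact rpow_inv_natCast_pow ht (by norm_num)

lemma add_rpow_one_div_three_pow_three {u v : ℝ} (hu : 0 ≤ u) (hv : 0 ≤ v) :
    (u ^ ((1 : ℝ) / 3) + v ^ ((1 : ℝ) / 3)) ^ 3 =
      u + v + 3 * (u * v) ^ ((1 : ℝ) / 3) * (u ^ ((1 : ℝ) / 3) + v ^ ((1 : ℝ) / 3)) := by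
  rw [mul_rpow hu hv]
  linear_combination rpow_one_div_three_pow_three hu + rpow_one_div_three_pow_three hv

noncomputable def cardanoPsi (ζ : ℝ) : ℝ :=
  ζ ^ ((1 : ℝ) / 3) * ((1 + √(1 - ζ)) ^ ((1 : ℝ) / 3) + (1 - √(1 - ζ)) ^ ((1 : ℝ) / 3))

lemma cardanoPsi_pow_three {ζ : ℝ} (h0 : 0 ≤ ζ) (h1 : ζ ≤ 1) :
    cardanoPsi ζ ^ 3 = 2 * ζ + 3 * ζ * cardanoPsi ζ := by
  set Z := √(1 - ζ) with hZ
  have hZsq : Z ^ 2 = 1 - ζ := sq_sqrt (by linarith)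
  have hZ0 : 0 ≤ Z := sqrt_nonneg _
  have hZ1 : Z ≤ 1 := by nlinarith
  have hsum : cardanoPsi ζ = (ζ * (1 + Z)) ^ ((1 : ℝ) / 3) + (ζ * (1 - Z)) ^ ((1 : ℝ) / 3) := by
    rw [cardanoPsi, ← hZ, mul_rpow h0 (by linarith), mul_rpow h0 (by linarith), mul_add]
  have hprod : (ζ * (1 + Z) * (ζ * (1 - Z))) ^ ((1 : ℝ) / 3) = ζ := by
    rw [show ζ * (1 + Z) * (ζ * (1 - Z)) = ζ ^ 3 by linear_combination -ζ ^ 2 * hZsq, one_div]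
    exact pow_rpow_inv_natCast h0 (by norm_num)
  rw [hsum, add_rpow_one_div_three_pow_three (by nlinarith) (by nlinarith), hprod]
  ring

lemma cardanoPsi_pos {ζ : ℝ} (h0 : 0 < ζ) : 0 < cardanoPsi ζ := by
  have hZ1 : √(1 - ζ) ≤ 1 := sqrt_le_one.mpr (by linarith)
  have h1Z : 0 ≤ 1 - √(1 - ζ) := by linarith
  unfold cardanoPsi
  positivity

lemma cubic_of_scaled_root {γ₂ γ₄ ζ ψ : ℝ} (h2 : γ₂ ≠ 0) (hζ : 9 * γ₄ * ζ = 8 * γ₂ ^ 3)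
    (hψ : ψ ^ 3 = 2 * ζ + 3 * ζ * ψ) :
    γ₄ * (3 * ψ / (2 * γ₂)) ^ 3 = 6 + 6 * γ₂ * (3 * ψ / (2 * γ₂)) := by
  field_simp
  linear_combination 27 * γ₄ * hψ + 3 * (2 + 3 * ψ) * hζ

noncomputable def quarticPotential (γ₂ γ₄ x : ℝ) : ℝ := -x - γ₂ * x ^ 2 / 2 + γ₄ * x ^ 4 / 24

section QuarticPotential

variable {γ₂ γ₄ : ℝ}

lemma hasDerivAt_quarticPotential (x : ℝ) :
    HasDerivAt (quarticPotential γ₂ γ₄) (-1 - γ₂ * x + γ₄ * x ^ 3 / 6) x := by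
  have h : HasDerivAt (fun y => -y - γ₂ * y ^ 2 / 2 + γ₄ * y ^ 4 / 24)
      (-1 - γ₂ * (2 * x ^ 1) / 2 + γ₄ * (4 * x ^ 3) / 24) x :=
    ((hasDerivAt_id x).neg.sub (((hasDerivAt_pow 2 x).const_mul γ₂).div_const 2)).add
      (((hasDerivAt_pow 4 x).const_mul γ₄).div_const 24)
  exact h.congr_deriv (by ring)

lemma deriv_quarticPotential (x : ℝ) :
    deriv (quarticPotential γ₂ γ₄) x = -1 - γ₂ * x + γ₄ * x ^ 3 / 6 :=
  (hasDerivAt_quarticPotential x).deriv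

lemma quarticPotential_of_cubic {r : ℝ} (hr : γ₄ * r ^ 3 = 6 + 6 * γ₂ * r) :
    quarticPotential γ₂ γ₄ r = -(3 * r + γ₂ * r ^ 2) / 4 := by
  unfold quarticPotential
  linear_combination r * hr / 24

lemma mul_sq_gt_of_cubic {r : ℝ} (hr0 : 0 < r) (hr : γ₄ * r ^ 3 = 6 + 6 * γ₂ * r) :
    6 * γ₂ < γ₄ * r ^ 2 := by
  nlinarith

lemma eq_of_cubic_of_cubic (h4 : 0 < γ₄) {x r : ℝ} (hx0 : 0 < x) (hr0 : 0 < r)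
    (hx : γ₄ * x ^ 3 = 6 + 6 * γ₂ * x) (hr : γ₄ * r ^ 3 = 6 + 6 * γ₂ * r) : x = r := by
  have hfactor : (x - r) * (γ₄ * (x ^ 2 + x * r + r ^ 2) - 6 * γ₂) = 0 := by
    linear_combination hx - hr
  have hpos : 0 < γ₄ * (x ^ 2 + x * r + r ^ 2) - 6 * γ₂ := by
    nlinarith [mul_sq_gt_of_cubic hx0 hx, mul_pos h4 (mul_pos hx0 hr0), mul_pos h4 (pow_pos hr0 2)]
  exact sub_eq_zero.mp ((mul_eq_zero.mp hfactor).resolve_right hpos.ne')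

lemma isMinOn_quarticPotential (h2 : 0 ≤ γ₂) (h4 : 0 < γ₄) {r : ℝ} (hr0 : 0 < r)
    (hr : γ₄ * r ^ 3 = 6 + 6 * γ₂ * r) : IsMinOn (quarticPotential γ₂ γ₄) (Ici 0) r := by
  intro y (hy : 0 ≤ y)
  have hdiff : 24 * γ₄ * (quarticPotential γ₂ γ₄ y - quarticPotential γ₂ γ₄ r) =
      γ₄ * (y - r) ^ 2 * (γ₄ * (y ^ 2 + 2 * r * y + 3 * r ^ 2) - 12 * γ₂) := by
    unfold quarticPotential
    linear_combination 4 * γ₄ * (y - r) * hr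
  have hfactor : 0 ≤ γ₄ * (y ^ 2 + 2 * r * y + 3 * r ^ 2) - 12 * γ₂ := by
    nlinarith [mul_sq_gt_of_cubic hr0 hr, mul_nonneg h4.le (sq_nonneg y),
      mul_nonneg h4.le (mul_nonneg hr0.le hy)]
  have : 0 ≤ 24 * γ₄ * (quarticPotential γ₂ γ₄ y - quarticPotential γ₂ γ₄ r) := by
    rw [hdiff]
    exact mul_nonneg (mul_nonneg h4.le (sq_nonneg _)) hfactor
  show quarticPotential γ₂ γ₄ r ≤ quarticPotential γ₂ γ₄ y
  nlinarith

end QuarticPotential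

theorem cardano_min (γ₂ γ₄ : ℝ) (h2 : 0 < γ₂) (h4 : 0 < γ₄) (hd : 8 * γ₂^3 < 9 * γ₄) :
    let F : ℝ → ℝ := fun x => -x - γ₂ * x^2 / 2 + γ₄ * x^4 / 24
    let ζ : ℝ := 8 * γ₂^3 / (9 * γ₄)
    let Z : ℝ := Real.sqrt (1 - ζ)
    let ψ : ℝ := ζ ^ ((1:ℝ)/3) * ((1 + Z) ^ ((1:ℝ)/3) + (1 - Z) ^ ((1:ℝ)/3))
    let xstar : ℝ := (3 * ζ ^ ((1:ℝ)/3) / (2 * γ₂)) * ((1 + Z) ^ ((1:ℝ)/3) + (1 - Z) ^ ((1:ℝ)/3))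
    0 < xstar ∧ deriv F xstar = 0 ∧ (∀ x : ℝ, 0 < x → deriv F x = 0 → x = xstar) ∧
    IsMinOn F (Set.Ici (0:ℝ)) xstar ∧
    F xstar = -(9 / (16 * γ₂)) * (2 * ψ + ψ^2) := by
  intro F ζ Z ψ xstar
  have hF : F = quarticPotential γ₂ γ₄ := rfl
  have hζ0 : 0 < ζ := by positivity
  have hζ1 : ζ < 1 := (div_lt_one (by positivity)).mpr hd
  have hψ : ψ = cardanoPsi ζ := rfl
  have hx : xstar = 3 * ψ / (2 * γ₂) := by simp only [xstar, ψ]; ring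
  have hxpos : 0 < xstar := by rw [hx, hψ]; have := cardanoPsi_pos hζ0; positivity
  have hcubic : γ₄ * xstar ^ 3 = 6 + 6 * γ₂ * xstar := by
    rw [hx, hψ]
    exact cubic_of_scaled_root h2.ne' (by simp only [ζ]; field_simp)
      (cardanoPsi_pow_three hζ0.le hζ1.le)
  rw [hF]
  refine ⟨hxpos, ?_, fun x hx0 hdx => ?_, isMinOn_quarticPotential h2.le h4 hxpos hcubic, ?_⟩
  · rw [deriv_quarticPotential]
    linear_combination hcubic / 6
  · rw [deriv_quarticPotential] at hdx
    exact eq_of_cubic_of_cubic h4 hx0 hxpos (by linear_combination 6 * hdx) hcubic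
  · rw [quarticPotential_of_cubic hcubic, hx]
    field_simp
    ring
end

section
/- Let 1 ≤ ℓ ≤ m−1 be integers with m ≥ 2, and let f(x) = −Σ_{i=1}^{ℓ} αᵢ xⁱ + Σ_{i=ℓ+1}^{m} αᵢ xⁱ, where all αᵢ ≥ 0, α₁ > 0, α_ℓ > 0, and α_m > 0. Then f has a unique local extremum on (0,∞), which is a minimum: there exists a unique x₁ > 0 with f'(x₁) = 0, f' < 0 on (0,x₁), and f' > 0 on (x₁,∞). -/
/-!
Write `f'(x) = x^(ℓ-1) g(x)` on `(0, ∞)` with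
`g(x) = ∑_{i > ℓ} i αᵢ x^(i-ℓ) - ∑_{i ≤ ℓ} i αᵢ / x^(ℓ-i)`.
Every term of `g` is nondecreasing in `x` (positive powers with nonnegative coefficients, minus
nonnegative multiples of inverse powers), and the term `m αₘ x^(m-ℓ)` is strictly increasing, so
`g` is strictly increasing. Near `0` the first sum vanishes while the second is at least `ℓ αℓ`,
so `g < 0`; at infinity `g → ∞`. By the intermediate value theorem `g`, and with it `f'`, changes
sign exactly once on `(0, ∞)`, from negative to positive.
-/

open Finset Filter Topology

structure SignChangeAt (g : ℝ → ℝ) (x₀ : ℝ) : Prop where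
  pos : 0 < x₀
  neg_of_lt : ∀ x, 0 < x → x < x₀ → g x < 0
  eq_zero : g x₀ = 0
  pos_of_gt : ∀ x, x₀ < x → 0 < g x

namespace SignChangeAt

variable {g : ℝ → ℝ} {x₀ : ℝ}

theorem eq_of_apply_eq_zero (h : SignChangeAt g x₀) {x : ℝ} (hx : 0 < x) (hgx : g x = 0) :
    x = x₀ := by
  rcases lt_trichotomy x x₀ with hlt | heq | hgt
  · exact absurd hgx (h.neg_of_lt x hx hlt).ne
  · exact heq
  · exact absurd hgx (h.pos_of_gt x hgt).ne'

theorem of_eq_mul {d w : ℝ → ℝ} (h : SignChangeAt g x₀) (hw : ∀ x, 0 < x → 0 < w x)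
    (hd : ∀ x, 0 < x → d x = w x * g x) : SignChangeAt d x₀ where
  pos := h.pos
  neg_of_lt x hx hlt := hd x hx ▸ mul_neg_of_pos_of_neg (hw x hx) (h.neg_of_lt x hx hlt)
  eq_zero := by rw [hd x₀ h.pos, h.eq_zero, mul_zero]
  pos_of_gt x hgt := by
    have hx := h.pos.trans hgt
    exact hd x hx ▸ mul_pos (hw x hx) (h.pos_of_gt x hgt)

end SignChangeAt

theorem StrictMonoOn.exists_signChangeAt {g : ℝ → ℝ} (hmono : StrictMonoOn g (Set.Ioi 0))
    (hcont : ContinuousOn g (Set.Ioi 0)) (hzero : ∀ᶠ x in 𝓝[>] 0, g x < 0)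
    (htop : ∀ᶠ x in atTop, 0 < g x) : ∃ x₀, SignChangeAt g x₀ := by
  obtain ⟨a, hga, ha⟩ := (hzero.and self_mem_nhdsWithin).exists
  obtain ⟨b, hgb, hab⟩ := (htop.and (eventually_gt_atTop a)).exists
  obtain ⟨x₀, ⟨hax₀, -⟩, hgx₀⟩ := intermediate_value_Ioo hab.le
    (hcont.mono fun x hx => lt_of_lt_of_le ha hx.1) ⟨hga, hgb⟩
  have hx₀ : 0 < x₀ := lt_trans ha hax₀
  refine ⟨x₀, hx₀, fun x hx hlt => ?_, hgx₀, fun x hgt => ?_⟩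
  · exact hgx₀ ▸ hmono hx hx₀ hlt
  · exact hgx₀ ▸ hmono hx₀ (hx₀.trans hgt) hgt

noncomputable def normalizedDeriv (c : ℕ → ℝ) (ℓ m : ℕ) (x : ℝ) : ℝ :=
  ∑ i ∈ Icc (ℓ + 1) m, c i * x ^ (i - ℓ) - ∑ i ∈ Icc 1 ℓ, c i / x ^ (ℓ - i)

section normalizedDeriv

variable {c : ℕ → ℝ} {ℓ m : ℕ}

theorem continuousOn_normalizedDeriv (c : ℕ → ℝ) (ℓ m : ℕ) :
    ContinuousOn (normalizedDeriv c ℓ m) (Set.Ioi 0) := by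
  unfold normalizedDeriv
  fun_prop (disch := exact fun x hx => pow_ne_zero _ (ne_of_gt hx))

theorem strictMonoOn_normalizedDeriv (hc : ∀ i, 0 ≤ c i) (hℓm : ℓ < m) (hcm : 0 < c m) :
    StrictMonoOn (normalizedDeriv c ℓ m) (Set.Ioi 0) := by
  intro x (hx : 0 < x) y _ hxy
  have hupper : ∑ i ∈ Icc (ℓ + 1) m, c i * x ^ (i - ℓ) < ∑ i ∈ Icc (ℓ + 1) m, c i * y ^ (i - ℓ) :=
    sum_lt_sum (fun i _ => by gcongr; exact hc i)
      ⟨m, mem_Icc.2 ⟨hℓm, le_rfl⟩, by gcongr; omega⟩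
  have hlower : ∑ i ∈ Icc 1 ℓ, c i / y ^ (ℓ - i) ≤ ∑ i ∈ Icc 1 ℓ, c i / x ^ (ℓ - i) :=
    sum_le_sum fun i _ => by gcongr; exact hc i
  unfold normalizedDeriv
  linarith

theorem eventually_normalizedDeriv_neg (hc : ∀ i, 0 ≤ c i) (hℓ : 1 ≤ ℓ) (hcℓ : 0 < c ℓ) :
    ∀ᶠ x in 𝓝[>] 0, normalizedDeriv c ℓ m x < 0 := by
  have hupper : Tendsto (fun x : ℝ => ∑ i ∈ Icc (ℓ + 1) m, c i * x ^ (i - ℓ)) (𝓝 0) (𝓝 0) := by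
    have hcont : Continuous (fun x : ℝ => ∑ i ∈ Icc (ℓ + 1) m, c i * x ^ (i - ℓ)) := by fun_prop
    convert hcont.tendsto 0 using 2
    refine (sum_eq_zero fun i hi => ?_).symm
    rw [zero_pow (by rw [mem_Icc] at hi; omega), mul_zero]
  filter_upwards [nhdsWithin_le_nhds (hupper.eventually (gt_mem_nhds hcℓ)), self_mem_nhdsWithin]
    with x hupper_lt (hx : 0 < x)
  have hlower : c ℓ ≤ ∑ i ∈ Icc 1 ℓ, c i / x ^ (ℓ - i) := by
    simpa using single_le_sum (f := fun i => c i / x ^ (ℓ - i))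
      (fun i _ => div_nonneg (hc i) (pow_pos hx _).le) (mem_Icc.2 ⟨hℓ, le_rfl⟩)
  unfold normalizedDeriv
  linarith

theorem tendsto_normalizedDeriv_atTop (hc : ∀ i, 0 ≤ c i) (hℓm : ℓ < m) (hcm : 0 < c m) :
    Tendsto (normalizedDeriv c ℓ m) atTop atTop := by
  have hlead : Tendsto (fun x : ℝ => c m * x ^ (m - ℓ) + -∑ i ∈ Icc 1 ℓ, c i) atTop atTop :=
    tendsto_atTop_add_const_right _ _ ((tendsto_pow_atTop (by omega)).const_mul_atTop hcm)
  refine tendsto_atTop_mono' _ ?_ hlead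
  filter_upwards [eventually_ge_atTop 1] with x hx
  have hupper : c m * x ^ (m - ℓ) ≤ ∑ i ∈ Icc (ℓ + 1) m, c i * x ^ (i - ℓ) :=
    single_le_sum (f := fun i => c i * x ^ (i - ℓ)) (fun i _ => by have := hc i; positivity)
      (mem_Icc.2 ⟨hℓm, le_rfl⟩)
  have hlower : ∑ i ∈ Icc 1 ℓ, c i / x ^ (ℓ - i) ≤ ∑ i ∈ Icc 1 ℓ, c i :=
    sum_le_sum fun i _ => div_le_self (hc i) (one_le_pow₀ hx)
  unfold normalizedDeriv
  linarith

end normalizedDeriv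

theorem deriv_eq_pow_mul_normalizedDeriv (α : ℕ → ℝ) {ℓ : ℕ} (hℓ : 1 ≤ ℓ) (m : ℕ) {x : ℝ}
    (hx : x ≠ 0) :
    deriv (fun x : ℝ => -(∑ i ∈ Icc 1 ℓ, α i * x ^ i) + ∑ i ∈ Icc (ℓ + 1) m, α i * x ^ i) x =
      x ^ (ℓ - 1) * normalizedDeriv (fun i => i * α i) ℓ m x := by
  have hmonomials (s : Finset ℕ) : HasDerivAt (fun x : ℝ => ∑ i ∈ s, α i * x ^ i)
      (∑ i ∈ s, α i * (i * x ^ (i - 1))) x :=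
    HasDerivAt.fun_sum fun i _ => (hasDerivAt_pow i x).const_mul (α i)
  rw [((hmonomials _).fun_neg.fun_add (hmonomials _)).deriv, normalizedDeriv, mul_sub, mul_sum,
    mul_sum, neg_add_eq_sub]
  congr 1 <;> refine sum_congr rfl fun i hi => ?_ <;> rw [mem_Icc] at hi
  · rw [show i - 1 = (ℓ - 1) + (i - ℓ) by omega, pow_add]
    ring
  · rw [show ℓ - 1 = (i - 1) + (ℓ - i) by omega, pow_add]
    field_simp

theorem unique_minimum_general (m ℓ : ℕ) (hℓ1 : 1 ≤ ℓ) (hℓm : ℓ ≤ m - 1)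
    (α : ℕ → ℝ) (hα : ∀ i, 0 ≤ α i) (hℓ : 0 < α ℓ) (hαm : 0 < α m) :
    let f : ℝ → ℝ := fun x =>
      -(∑ i ∈ Finset.Icc 1 ℓ, α i * x ^ i) + ∑ i ∈ Finset.Icc (ℓ+1) m, α i * x ^ i
    ∃ x₁ : ℝ, 0 < x₁ ∧ deriv f x₁ = 0 ∧
      (∀ x : ℝ, 0 < x → x < x₁ → deriv f x < 0) ∧
      (∀ x : ℝ, x₁ < x → 0 < deriv f x) ∧
      (∀ x : ℝ, 0 < x → deriv f x = 0 → x = x₁) := by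
  intro f
  have hℓm' : ℓ < m := by omega
  have hc : ∀ i : ℕ, 0 ≤ (i : ℝ) * α i := fun i => mul_nonneg i.cast_nonneg (hα i)
  have hpos {i : ℕ} (hi : 1 ≤ i) (hαi : 0 < α i) : 0 < (i : ℝ) * α i :=
    mul_pos (by exact_mod_cast hi) hαi
  have hcm := hpos (by omega) hαm
  obtain ⟨x₁, hg⟩ := (strictMonoOn_normalizedDeriv hc hℓm' hcm).exists_signChangeAt
    (continuousOn_normalizedDeriv _ ℓ m) (eventually_normalizedDeriv_neg hc hℓ1 (hpos hℓ1 hℓ))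
    ((tendsto_normalizedDeriv_atTop hc hℓm' hcm).eventually_gt_atTop 0)
  have hf : SignChangeAt (deriv f) x₁ :=
    hg.of_eq_mul (fun x hx => pow_pos hx _)
      fun x hx => deriv_eq_pow_mul_normalizedDeriv α hℓ1 m hx.ne'
  exact ⟨x₁, hf.pos, hf.eq_zero, hf.neg_of_lt, hf.pos_of_gt,
    fun _ hx h => hf.eq_of_apply_eq_zero hx h⟩

theorem unique_minimum (m ℓ : ℕ) (hm : 2 ≤ m) (hℓ1 : 1 ≤ ℓ) (hℓm : ℓ ≤ m - 1)
    (α : ℕ → ℝ) (hα : ∀ i, 0 ≤ α i) (h1 : 0 < α 1) (hℓ : 0 < α ℓ) (hαm : 0 < α m) :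
    let f : ℝ → ℝ := fun x =>
      -(∑ i ∈ Finset.Icc 1 ℓ, α i * x ^ i) + ∑ i ∈ Finset.Icc (ℓ+1) m, α i * x ^ i
    ∃ x₁ : ℝ, 0 < x₁ ∧ deriv f x₁ = 0 ∧
      (∀ x : ℝ, 0 < x → x < x₁ → deriv f x < 0) ∧
      (∀ x : ℝ, x₁ < x → 0 < deriv f x) ∧
      (∀ x : ℝ, 0 < x → deriv f x = 0 → x = x₁) :=
  unique_minimum_general m ℓ hℓ1 hℓm α hα hℓ hαm
end

section
/- For 0 < b < 1, q > 0, j ∈ {0,1}, and w ≥ 0: w · ∫₀¹ κ^{q+j}(1−κ)^{b−1} exp(w(1−κ)) dκ = (q+j) · B(q+j, b) · [M(b, b+q+j, w) − M(b−1, b+q+j, w)]. -/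
/-- Kummer's confluent hypergeometric function `M(a, c, w)`. -/
noncomputable def kummerM (a c w : ℝ) : ℝ :=
  ∑' i : ℕ, ((ascPochhammer ℝ i).eval a / (ascPochhammer ℝ i).eval c) * w ^ i / (Nat.factorial i)

/-- The Beta function as an integral. -/
noncomputable def betaFn (x y : ℝ) : ℝ :=
  ∫ t in (0:ℝ)..1, t ^ (x - 1) * (1 - t) ^ (y - 1)

/-!
Expanding `exp (w (1 - κ))` in its power series and integrating termwise (the series is dominated
by `exp |w|` times the Beta integrand) turns the left side into `∑ wⁿ⁺¹/n! · B(p + 1, b + n)` with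
`p = q + j`. On the right, `(b)ₙ₊₁ - (b - 1)ₙ₊₁ = (n + 1) (b)ₙ`, so
`M(b, c, w) - M(b - 1, c, w) = ∑ (b)ₙ/(c)ₙ₊₁ · wⁿ⁺¹/n!`, and with `c = b + p` the Gamma-function form
of the Beta function gives `p B(p, b) (b)ₙ/(c)ₙ₊₁ = B(p + 1, b + n)`.
-/

open MeasureTheory Polynomial Filter Nat

theorem ascPochhammer_eval_succ_sub_eval_sub_one {R : Type*} [CommRing R] (a : R) (n : ℕ) :
    (ascPochhammer R (n + 1)).eval a - (ascPochhammer R (n + 1)).eval (a - 1)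
      = (n + 1) * (ascPochhammer R n).eval a := by
  nth_rw 1 [ascPochhammer_succ_right]
  rw [ascPochhammer_succ_left]
  simp only [eval_mul, eval_comp, eval_add, eval_X, eval_one, eval_natCast, sub_add_cancel]
  ring

theorem Real.Gamma_add_nat_eq_ascPochhammer_mul {x : ℝ} (hx : 0 < x) (n : ℕ) :
    Real.Gamma (x + n) = (ascPochhammer ℝ n).eval x * Real.Gamma x := by
  induction n with
  | zero => simp
  | succ n ih =>
    rw [Nat.cast_succ, ← add_assoc, Real.Gamma_add_one (by positivity), ih,
      ascPochhammer_succ_right]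
    simp only [eval_mul, eval_add, eval_X, eval_natCast]
    ring

theorem betaFn_eq_beta {x y : ℝ} (hx : 0 < x) (hy : 0 < y) :
    betaFn x y = ProbabilityTheory.beta x y := by
  have h : Complex.betaIntegral x y = (betaFn x y : ℂ) := by
    rw [betaFn, ← intervalIntegral.integral_ofReal, Complex.betaIntegral]
    refine intervalIntegral.integral_congr fun t ht => ?_
    rw [Set.uIcc_of_le zero_le_one] at ht
    simp only [Complex.ofReal_mul, Complex.ofReal_cpow ht.1,
      Complex.ofReal_cpow (sub_nonneg.2 ht.2), Complex.ofReal_sub, Complex.ofReal_one]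
  rw [ProbabilityTheory.beta_eq_betaIntegralReal x y hx hy, h, Complex.ofReal_re]

theorem intervalIntegrable_rpow_mul_one_sub_rpow {p s : ℝ} (hp : 0 ≤ p) (hs : -1 < s) :
    IntervalIntegrable (fun t : ℝ => t ^ p * (1 - t) ^ s) volume 0 1 := by
  have h1 : IntervalIntegrable (fun t : ℝ => (1 - t) ^ s) volume 0 1 := by
    simpa using
      ((intervalIntegral.intervalIntegrable_rpow' hs (a := 0) (b := 1)).comp_sub_left 1).symm
  exact h1.continuousOn_mul fun t _ =>
    (Real.continuousAt_rpow_const t p (Or.inr hp)).continuousWithinAt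

theorem betaFn_add_one_add_nat {p b : ℝ} (hp : 0 < p) (hb : 0 < b) (k : ℕ) :
    betaFn (p + 1) (b + k)
      = p * betaFn p b * (ascPochhammer ℝ k).eval b / (ascPochhammer ℝ (k + 1)).eval (b + p) := by
  have hbp : 0 < b + p := by positivity
  have hsum : p + 1 + (b + k) = b + p + ((k + 1 : ℕ) : ℝ) := by push_cast; ring
  rw [betaFn_eq_beta (by positivity) (by positivity), betaFn_eq_beta hp hb, ProbabilityTheory.beta,
    ProbabilityTheory.beta, hsum, Real.Gamma_add_nat_eq_ascPochhammer_mul hbp,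
    Real.Gamma_add_nat_eq_ascPochhammer_mul hb, Real.Gamma_add_one hp.ne', add_comm p b]
  have := Real.Gamma_pos_of_pos hbp
  have := ascPochhammer_pos (k + 1) _ hbp
  field_simp

noncomputable def kummerTerm (a c w : ℝ) (i : ℕ) : ℝ :=
  ((ascPochhammer ℝ i).eval a / (ascPochhammer ℝ i).eval c) * w ^ i / i !

theorem kummerTerm_succ (a : ℝ) {c : ℝ} (hc : 0 < c) (w : ℝ) (i : ℕ) :
    kummerTerm a c w (i + 1) = kummerTerm a c w i * ((a + i) * w / ((c + i) * (i + 1))) := by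
  have := ascPochhammer_pos i c hc
  have : 0 < c + i := by positivity
  simp only [kummerTerm, ascPochhammer_succ_right, eval_mul, eval_add, eval_X, eval_natCast,
    Nat.factorial_succ, pow_succ, Nat.cast_mul, Nat.cast_succ]
  field_simp

theorem summable_kummerTerm (a : ℝ) {c : ℝ} (hc : 0 < c) (w : ℝ) :
    Summable (kummerTerm a c w) := by
  refine summable_of_ratio_norm_eventually_le (r := 1 / 2) (by norm_num) ?_
  filter_upwards [eventually_ge_atTop ⌈|a| + 4 * |w|⌉₊] with i hi
  have hi' : |a| + 4 * |w| ≤ i := Nat.ceil_le.1 hi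
  have hratio : |(a + i) * w / ((c + i) * (i + 1))| ≤ 1 / 2 := by
    have h1 : |a + i| ≤ 2 * (c + i) :=
      (abs_add_le _ _).trans (by rw [Nat.abs_cast]; linarith [abs_nonneg w])
    have h2 : 4 * |w| ≤ i + 1 := by linarith [abs_nonneg a]
    have hden : 0 < (c + i) * (i + 1) := by positivity
    rw [abs_div, abs_mul, abs_of_pos hden, div_le_iff₀ hden]
    nlinarith [mul_le_mul h1 h2 (by positivity) (by positivity)]
  rw [kummerTerm_succ a hc, norm_mul, mul_comm]
  exact mul_le_mul_of_nonneg_right hratio (norm_nonneg _)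

theorem kummerTerm_succ_sub_kummerTerm_sub_one (a c w : ℝ) (k : ℕ) :
    kummerTerm a c w (k + 1) - kummerTerm (a - 1) c w (k + 1)
      = (ascPochhammer ℝ k).eval a / (ascPochhammer ℝ (k + 1)).eval c * w ^ (k + 1) / k ! := by
  rw [kummerTerm, kummerTerm, ← sub_div, ← sub_mul, ← sub_div,
    ascPochhammer_eval_succ_sub_eval_sub_one, Nat.factorial_succ, Nat.cast_mul]
  push_cast
  field_simp

theorem hasSum_kummerM_sub_kummerM_sub_one (a : ℝ) {c : ℝ} (hc : 0 < c) (w : ℝ) :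
    HasSum (fun k : ℕ => (ascPochhammer ℝ k).eval a / (ascPochhammer ℝ (k + 1)).eval c
      * w ^ (k + 1) / k !) (kummerM a c w - kummerM (a - 1) c w) := by
  have h := (summable_kummerTerm a hc w).hasSum.sub (summable_kummerTerm (a - 1) hc w).hasSum
  have h0 : kummerTerm a c w 0 - kummerTerm (a - 1) c w 0 = 0 := by simp [kummerTerm]
  rw [← hasSum_nat_add_iff' 1] at h
  simp only [kummerTerm_succ_sub_kummerTerm_sub_one, Finset.range_one, Finset.sum_singleton, h0,
    sub_zero] at h
  exact h

theorem hasSum_pow_div_factorial_mul_betaFn {p b : ℝ} (hp : 0 ≤ p) (hb : 0 < b) (w : ℝ) :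
    HasSum (fun n : ℕ => w ^ n / n ! * betaFn (p + 1) (b + n))
      (∫ κ in (0:ℝ)..1, κ ^ p * (1 - κ) ^ (b - 1) * Real.exp (w * (1 - κ))) := by
  set G : ℝ → ℝ := fun κ => κ ^ p * (1 - κ) ^ (b - 1)
  have hG : IntervalIntegrable G volume 0 1 :=
    intervalIntegrable_rpow_mul_one_sub_rpow hp (by linarith)
  have hterm : ∀ n : ℕ, ∫ κ in (0:ℝ)..1, G κ * ((w * (1 - κ)) ^ n / n !)
      = w ^ n / n ! * betaFn (p + 1) (b + n) := by
    intro n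
    rw [betaFn, ← intervalIntegral.integral_const_mul]
    refine intervalIntegral.integral_congr_ae ((volume.ae_ne 1).mono fun κ hκ _ => ?_)
    rw [add_sub_cancel_right, add_sub_right_comm,
      Real.rpow_add_natCast (sub_ne_zero.2 (Ne.symm hκ)), mul_pow]
    ring
  simp_rw [← hterm]
  have hexp : ∀ x : ℝ, HasSum (fun n : ℕ => x ^ n / n !) (Real.exp x) := fun x => by
    simpa only [Real.exp_eq_exp_ℝ] using NormedSpace.expSeries_div_hasSum_exp x
  refine intervalIntegral.hasSum_integral_of_dominated_convergence
    (fun n κ => G κ * (|w| ^ n / n !)) (fun n => ?_) (fun n => ae_of_all _ fun κ hκ => ?_)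
    (ae_of_all _ fun κ _ => ((hexp |w|).mul_left (G κ)).summable) ?_
    (ae_of_all _ fun κ _ => (hexp _).mul_left (G κ))
  · exact (hG.def'.aestronglyMeasurable).mul (by fun_prop : Continuous _).aestronglyMeasurable
  · rw [Set.uIoc_of_le zero_le_one] at hκ
    have h1κ : 0 ≤ 1 - κ := sub_nonneg.2 hκ.2
    have hGκ : 0 ≤ G κ := mul_nonneg (Real.rpow_nonneg hκ.1.le _) (Real.rpow_nonneg h1κ _)
    rw [norm_mul, Real.norm_of_nonneg hGκ, norm_div, norm_pow, Real.norm_natCast, norm_mul,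
      Real.norm_of_nonneg h1κ, mul_pow]
    gcongr
    exact mul_le_of_le_one_right (by positivity) (pow_le_one₀ h1κ (by linarith [hκ.1]))
  · simp_rw [((hexp |w|).mul_left _).tsum_eq]
    exact hG.mul_const _

theorem mul_integral_rpow_mul_exp_eq_kummerM_sub {p b : ℝ} (hp : 0 < p) (hb : 0 < b) (w : ℝ) :
    w * ∫ κ in (0:ℝ)..1, κ ^ p * (1 - κ) ^ (b - 1) * Real.exp (w * (1 - κ))
      = p * betaFn p b * (kummerM b (b + p) w - kummerM (b - 1) (b + p) w) := by
  refine ((hasSum_pow_div_factorial_mul_betaFn hp.le hb w).mul_left w).unique ?_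
  convert (hasSum_kummerM_sub_kummerM_sub_one b (add_pos hb hp) w).mul_left (p * betaFn p b)
    using 2 with k
  rw [betaFn_add_one_add_nat hp hb, pow_succ]
  ring

theorem integral_parts_kummer_general (b q j w : ℝ) (hb0 : 0 < b)
    (hq : 0 < q) (hj : j = 0 ∨ j = 1) :
    w * ∫ κ in (0:ℝ)..1, κ ^ (q + j) * (1 - κ) ^ (b - 1) * Real.exp (w * (1 - κ))
      = (q + j) * betaFn (q + j) b *
        (kummerM b (b + q + j) w - kummerM (b - 1) (b + q + j) w) := by
  have hqj : 0 < q + j := by rcases hj with rfl | rfl <;> linarith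
  rw [add_assoc b q j]
  exact mul_integral_rpow_mul_exp_eq_kummerM_sub hqj hb0 w

theorem integral_parts_kummer (b q j w : ℝ) (hb0 : 0 < b) (hb1 : b < 1)
    (hq : 0 < q) (hj : j = 0 ∨ j = 1) (hw : 0 ≤ w) :
    w * ∫ κ in (0:ℝ)..1, κ ^ (q + j) * (1 - κ) ^ (b - 1) * Real.exp (w * (1 - κ))
      = (q + j) * betaFn (q + j) b *
        (kummerM b (b + q + j) w - kummerM (b - 1) (b + q + j) w) :=
  integral_parts_kummer_general b q j w hb0 hq hj
end
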